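/- If r ≥ 2 then D_r = (∑_{j=0}^{κ_r−2} L^{j·a_r})·D_{r−1} + L^{(κ_r−1)·a_r}·A_{r−1}. (The Claim in the proof of Theorem 5.10.) -/

import Mathlib

open Finset

/-- The ring of Laurent polynomials with rational exponents in a formal variable `L`. -/
noncomputable abbrev LaurentQ := AddMonoidAlgebra ℤ ℚ

/-- The monomial `L^q`. -/
noncomputable def Lpow (q : ℚ) : LaurentQ := AddMonoidAlgebra.single q 1

/-- `K i = ∑_{j=0}^{κ_i − 1} L^{j·a_i}`. -/
noncomputable def Kpoly (κ : ℕ → ℕ) (a : ℕ → ℚ) (i : ℕ) : LaurentQ :=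
  ∑ j ∈ Finset.range (κ i), Lpow ((j : ℚ) * a i)

/-- The `(i,j)` entry (with `1`-based indices) of the non-symmetric `L`-deformation `M`
of the intersection matrix of the chain. -/
noncomputable def entry (κ : ℕ → ℕ) (a : ℕ → ℚ) (i j : ℕ) : LaurentQ :=
  if i = j then Kpoly κ a i
  else if Odd i then
    if j + 1 = i then -(Lpow (a (i + 1)))
    else if j = i + 1 then -(Lpow (a (i + 2)))
    else if j = i + 2 then Lpow (a (i + 1)) - 1
    else 0
  else
    if j + 2 = i then Lpow (a (i - 1)) - 1
    else if j + 1 = i then -(Lpow (a (i - 2)))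
    else if j = i + 1 then -(Lpow (a (i - 1)))
    else 0

/-- `D_s`: the determinant of the top-left `s×s` submatrix of `M`. -/
noncomputable def Dpoly (κ : ℕ → ℕ) (a : ℕ → ℚ) (s : ℕ) : LaurentQ :=
  Matrix.det (Matrix.of fun i j : Fin s => entry κ a ((i : ℕ) + 1) ((j : ℕ) + 1))

/-- `A_s`: `A_1 = ∑_{j=0}^{κ_1−2} L^{j·a_1}`, and for `s ≥ 2`
`A_s = (∑_{j=0}^{κ_s−3} L^{j·a_s})·D_{s−1} + L^{(κ_s−2)·a_s}·A_{s−1}`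
(an empty sum being `0`). -/
noncomputable def Apoly (κ : ℕ → ℕ) (a : ℕ → ℚ) : ℕ → LaurentQ
  | 0 => 0
  | 1 => ∑ j ∈ Finset.range (κ 1 - 1), Lpow ((j : ℚ) * a 1)
  | (s + 2) =>
      (∑ j ∈ Finset.range (κ (s + 2) - 2), Lpow ((j : ℚ) * a (s + 2))) * Dpoly κ a (s + 1)
        + Lpow (((κ (s + 2) : ℚ) - 2) * a (s + 2)) * Apoly κ a (s + 1)
-- Lpow basics
lemma Lpow_add (p q : ℚ) : Lpow (p + q) = Lpow p * Lpow q := by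
  simp [Lpow, AddMonoidAlgebra.single_mul_single]

lemma Lpow_zero : Lpow 0 = 1 := rfl

lemma Lpow_isUnit (q : ℚ) : IsUnit (Lpow q) := by
  refine IsUnit.of_mul_eq_one (Lpow (-q)) ?_
  rw [← Lpow_add, add_neg_cancel, Lpow_zero]

-- entry evaluation lemmas
variable {κ : ℕ → ℕ} {a : ℕ → ℚ}

lemma entry_diag (i : ℕ) : entry κ a i i = Kpoly κ a i := by simp [entry]

lemma entry_odd_left {i j : ℕ} (h : Odd i) (hj : j + 1 = i) (hne : i ≠ j) :
    entry κ a i j = -Lpow (a (i + 1)) := by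
  rw [entry, if_neg hne, if_pos h, if_pos hj]

lemma entry_odd_right {i j : ℕ} (h : Odd i) (hj : j = i + 1) :
    entry κ a i j = -Lpow (a (i + 2)) := by
  rw [entry, if_neg (by omega), if_pos h, if_neg (by omega), if_pos hj]

lemma entry_odd_skew {i j : ℕ} (h : Odd i) (hj : j = i + 2) :
    entry κ a i j = Lpow (a (i + 1)) - 1 := by
  rw [entry, if_neg (by omega), if_pos h, if_neg (by omega), if_neg (by omega), if_pos hj]

lemma entry_even_left2 {i j : ℕ} (h : ¬ Odd i) (hj : j + 2 = i) :
    entry κ a i j = Lpow (a (i - 1)) - 1 := by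
  rw [entry, if_neg (by omega), if_neg h, if_pos hj]

lemma entry_even_left {i j : ℕ} (h : ¬ Odd i) (hj : j + 1 = i) (hne : i ≠ j) :
    entry κ a i j = -Lpow (a (i - 2)) := by
  rw [entry, if_neg hne, if_neg h, if_neg (by omega), if_pos hj]

lemma entry_even_right {i j : ℕ} (h : ¬ Odd i) (hj : j = i + 1) :
    entry κ a i j = -Lpow (a (i - 1)) := by
  rw [entry, if_neg (by omega), if_neg h, if_neg (by omega), if_neg (by omega), if_pos hj]

-- vanishing lemmas
lemma entry_zero_right {i j : ℕ} (h : i + 3 ≤ j) : entry κ a i j = 0 := by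
  rw [entry, if_neg (by omega)]
  split
  · rw [if_neg (by omega), if_neg (by omega), if_neg (by omega)]
  · rw [if_neg (by omega), if_neg (by omega), if_neg (by omega)]

lemma entry_zero_odd_left {i j : ℕ} (h : Odd i) (hj : j + 2 ≤ i) : entry κ a i j = 0 := by
  rw [entry, if_neg (by omega), if_pos h, if_neg (by omega), if_neg (by omega), if_neg (by omega)]

lemma entry_zero_even_left {i j : ℕ} (h : ¬ Odd i) (hj : j + 3 ≤ i) : entry κ a i j = 0 := by
  rw [entry, if_neg (by omega), if_neg h, if_neg (by omega), if_neg (by omega), if_neg (by omega)]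

lemma entry_zero_even_skew {i j : ℕ} (h : ¬ Odd i) (hj : j = i + 2) : entry κ a i j = 0 := by
  rw [entry, if_neg (by omega), if_neg h, if_neg (by omega), if_neg (by omega), if_neg (by omega)]

-- small determinants
lemma Dpoly_zero : Dpoly κ a 0 = 1 := Matrix.det_fin_zero

lemma Dpoly_one : Dpoly κ a 1 = Kpoly κ a 1 := by
  rw [Dpoly, Matrix.det_fin_one]
  exact entry_diag 1

lemma Dpoly_two : Dpoly κ a 2 = Kpoly κ a 1 * Kpoly κ a 2 - Lpow (a 0) * Lpow (a 3) := by
  rw [Dpoly, Matrix.det_fin_two]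
  show entry κ a 1 1 * entry κ a 2 2 - entry κ a 1 2 * entry κ a 2 1 = _
  rw [entry_diag, entry_diag, entry_odd_right (by decide) rfl,
    entry_even_left (by decide) rfl (by omega)]
  ring

-- sum shift lemmas
lemma shift_sum (q : ℚ) (n : ℕ) :
    Lpow q * (∑ j ∈ Finset.range n, Lpow ((j : ℚ) * q)) + 1
      = ∑ j ∈ Finset.range (n + 1), Lpow ((j : ℚ) * q) := by
  rw [Finset.mul_sum, Finset.sum_range_succ']
  simp only [← Lpow_add]
  norm_num
  congr 1
  refine Finset.sum_congr rfl fun j _ => ?_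
  congr 1
  ring

lemma geom_lemma (q : ℚ) (n : ℕ) :
    (Lpow q - 1) * (∑ j ∈ Finset.range n, Lpow ((j : ℚ) * q)) = Lpow ((n : ℚ) * q) - 1 := by
  have h := shift_sum q n
  rw [Finset.sum_range_succ] at h
  rw [sub_mul, one_mul]
  linear_combination h
/-- `T_{n+2}` for odd `n+2`: rows `1..n+1`, columns `1..n, n+2` of `M`. -/
noncomputable def ToddM (κ : ℕ → ℕ) (a : ℕ → ℚ) (n : ℕ) : LaurentQ :=
  Matrix.det (Matrix.of fun i j : Fin (n + 1) =>
    entry κ a ((i : ℕ) + 1) (if (j : ℕ) = n then n + 2 else (j : ℕ) + 1))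

/-- `T_{n+2}` for even `n+2`: rows `1..n, n+2`, columns `1..n+1` of `M`. -/
noncomputable def TevenM (κ : ℕ → ℕ) (a : ℕ → ℚ) (n : ℕ) : LaurentQ :=
  Matrix.det (Matrix.of fun i j : Fin (n + 1) =>
    entry κ a (if (i : ℕ) = n then n + 2 else (i : ℕ) + 1) ((j : ℕ) + 1))

variable {κ : ℕ → ℕ} {a : ℕ → ℚ}

lemma succAbove_middle_val (m : ℕ) (j : Fin (m + 1)) :
    ((((Fin.last m).castSucc).succAbove j : Fin (m + 2)) : ℕ)
      = if (j : ℕ) = m then m + 1 else (j : ℕ) := by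
  rcases eq_or_ne (j : ℕ) m with hj | hj
  · rw [Fin.succAbove, if_neg (by simp [Fin.lt_def]; omega), if_pos hj]
    simp [Fin.val_succ, hj]
  · rw [Fin.succAbove, if_pos (by simp [Fin.lt_def]; omega), if_neg hj]
    simp

lemma Eodd (m : ℕ) (h : Odd (m + 2)) :
    Dpoly κ a (m + 2) = Kpoly κ a (m + 2) * Dpoly κ a (m + 1)
      + Lpow (a (m + 3)) * ToddM κ a m := by
  obtain ⟨c, hc⟩ := h
  have hA : Dpoly κ a (m + 2) = Matrix.det
      (Matrix.of fun i j : Fin (m + 2) => entry κ a ((i : ℕ) + 1) ((j : ℕ) + 1)) := rfl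
  rw [hA, Matrix.det_succ_row _ (Fin.last (m + 1)), Fin.sum_univ_castSucc, Fin.sum_univ_castSucc]
  have hz : ∀ j : Fin m,
      (Matrix.of fun i j : Fin (m + 2) => entry κ a ((i : ℕ) + 1) ((j : ℕ) + 1))
        (Fin.last (m + 1)) ((j.castSucc).castSucc) = 0 := by
    intro j
    simp only [Matrix.of_apply, Fin.coe_castSucc, Fin.val_last]
    exact entry_zero_odd_left (by rw [Nat.odd_iff]; omega) (by omega)
  simp only [hz, zero_mul, mul_zero, Finset.sum_const_zero, zero_add,
    Matrix.of_apply, Fin.coe_castSucc, Fin.val_last, Fin.succAbove_last]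
  rw [entry_diag, entry_odd_left (by rw [Nat.odd_iff]; omega) (by omega) (by omega)]
  have hM2 : (Matrix.of fun i j : Fin (m + 2) =>
        entry κ a ((i : ℕ) + 1) ((j : ℕ) + 1)).submatrix Fin.castSucc Fin.castSucc
      = (Matrix.of fun i j : Fin (m + 1) => entry κ a ((i : ℕ) + 1) ((j : ℕ) + 1)) := rfl
  have hM1 : (Matrix.of fun i j : Fin (m + 2) =>
        entry κ a ((i : ℕ) + 1) ((j : ℕ) + 1)).submatrix Fin.castSucc
          ((Fin.last m).castSucc).succAbove
      = (Matrix.of fun i j : Fin (m + 1) =>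
          entry κ a ((i : ℕ) + 1) (if (j : ℕ) = m then m + 2 else (j : ℕ) + 1)) := by
    ext i j
    simp only [Matrix.submatrix_apply, Matrix.of_apply, Fin.coe_castSucc]
    have hv := succAbove_middle_val m j
    rcases eq_or_ne (j : ℕ) m with hj | hj
    · rw [if_pos hj] at hv
      rw [if_pos hj, hv]
    · rw [if_neg hj] at hv
      rw [if_neg hj, hv]
  rw [hM1, hM2]
  have hD : Matrix.det (Matrix.of fun i j : Fin (m + 1) =>
      entry κ a ((i : ℕ) + 1) ((j : ℕ) + 1)) = Dpoly κ a (m + 1) := rfl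
  have hT : Matrix.det (Matrix.of fun i j : Fin (m + 1) =>
      entry κ a ((i : ℕ) + 1) (if (j : ℕ) = m then m + 2 else (j : ℕ) + 1))
      = ToddM κ a m := rfl
  rw [hD, hT]
  rw [show ((-1 : LaurentQ) ^ (m + 1 + m) : LaurentQ) = -1 from Odd.neg_one_pow ⟨m, by ring⟩,
    show ((-1 : LaurentQ) ^ (m + 1 + (m + 1)) : LaurentQ) = 1 from Even.neg_one_pow ⟨m + 1, by ring⟩]
  have : Kpoly κ a (m + 1 + 1) = Kpoly κ a (m + 2) := rfl
  rw [this, show a (m + 1 + 1 + 1) = a (m + 3) from rfl]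
  ring
lemma Eeven (m : ℕ) (h : Even (m + 2)) :
    Dpoly κ a (m + 2) = Kpoly κ a (m + 2) * Dpoly κ a (m + 1)
      + Lpow (a (m + 3)) * TevenM κ a m := by
  obtain ⟨c, hc⟩ := h
  have hA : Dpoly κ a (m + 2) = Matrix.det
      (Matrix.of fun i j : Fin (m + 2) => entry κ a ((i : ℕ) + 1) ((j : ℕ) + 1)) := rfl
  rw [hA, Matrix.det_succ_column _ (Fin.last (m + 1)), Fin.sum_univ_castSucc,
    Fin.sum_univ_castSucc]
  have hz : ∀ k : Fin m,
      (Matrix.of fun i j : Fin (m + 2) => entry κ a ((i : ℕ) + 1) ((j : ℕ) + 1))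
        ((k.castSucc).castSucc) (Fin.last (m + 1)) = 0 := by
    intro k
    simp only [Matrix.of_apply, Fin.coe_castSucc, Fin.val_last]
    by_cases hk : (k : ℕ) + 4 ≤ m + 2
    · exact entry_zero_right (by omega)
    · exact entry_zero_even_skew (by rw [Nat.odd_iff]; omega) (by omega)
  simp only [hz, zero_mul, mul_zero, Finset.sum_const_zero, zero_add,
    Matrix.of_apply, Fin.coe_castSucc, Fin.val_last, Fin.succAbove_last]
  rw [entry_diag, entry_odd_right (i := m + 1) (j := m + 1 + 1) (by rw [Nat.odd_iff]; omega) (by omega)]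
  have hM2 : (Matrix.of fun i j : Fin (m + 2) =>
        entry κ a ((i : ℕ) + 1) ((j : ℕ) + 1)).submatrix Fin.castSucc Fin.castSucc
      = (Matrix.of fun i j : Fin (m + 1) => entry κ a ((i : ℕ) + 1) ((j : ℕ) + 1)) := rfl
  have hM1 : (Matrix.of fun i j : Fin (m + 2) =>
        entry κ a ((i : ℕ) + 1) ((j : ℕ) + 1)).submatrix
          ((Fin.last m).castSucc).succAbove Fin.castSucc
      = (Matrix.of fun i j : Fin (m + 1) =>
          entry κ a (if (i : ℕ) = m then m + 2 else (i : ℕ) + 1) ((j : ℕ) + 1)) := by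
    ext i j
    simp only [Matrix.submatrix_apply, Matrix.of_apply, Fin.coe_castSucc]
    have hv := succAbove_middle_val m i
    rcases eq_or_ne (i : ℕ) m with hi | hi
    · rw [if_pos hi] at hv
      rw [if_pos hi, hv]
    · rw [if_neg hi] at hv
      rw [if_neg hi, hv]
  rw [hM1, hM2]
  have hD : Matrix.det (Matrix.of fun i j : Fin (m + 1) =>
      entry κ a ((i : ℕ) + 1) ((j : ℕ) + 1)) = Dpoly κ a (m + 1) := rfl
  have hT : Matrix.det (Matrix.of fun i j : Fin (m + 1) =>
      entry κ a (if (i : ℕ) = m then m + 2 else (i : ℕ) + 1) ((j : ℕ) + 1))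
      = TevenM κ a m := rfl
  rw [hD, hT]
  rw [show ((-1 : LaurentQ) ^ (m + (m + 1)) : LaurentQ) = -1 from Odd.neg_one_pow ⟨m, by ring⟩,
    show ((-1 : LaurentQ) ^ (m + 1 + (m + 1)) : LaurentQ) = 1
      from Even.neg_one_pow ⟨m + 1, by ring⟩]
  rw [show Kpoly κ a (m + 1 + 1) = Kpoly κ a (m + 2) from rfl,
    show a (m + 1 + 2) = a (m + 3) from rfl]
  ring

lemma Godd (m : ℕ) (h : Odd (m + 3)) :
    ToddM κ a (m + 1) = -(Lpow (a (m + 1)) * Dpoly κ a (m + 1))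
      - (Lpow (a (m + 2)) - 1) * TevenM κ a m := by
  obtain ⟨c, hc⟩ := h
  have hA : ToddM κ a (m + 1) = Matrix.det (Matrix.of fun i j : Fin (m + 2) =>
      entry κ a ((i : ℕ) + 1) (if (j : ℕ) = m + 1 then m + 3 else (j : ℕ) + 1)) := rfl
  rw [hA, Matrix.det_succ_column _ (Fin.last (m + 1)), Fin.sum_univ_castSucc,
    Fin.sum_univ_castSucc]
  have hz : ∀ k : Fin m, (Matrix.of fun i j : Fin (m + 2) =>
      entry κ a ((i : ℕ) + 1) (if (j : ℕ) = m + 1 then m + 3 else (j : ℕ) + 1))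
        ((k.castSucc).castSucc) (Fin.last (m + 1)) = 0 := by
    intro k
    simp only [Matrix.of_apply, Fin.coe_castSucc, Fin.val_last, eq_self_iff_true, if_true]
    exact entry_zero_right (by omega)
  simp only [hz, zero_mul, mul_zero, Finset.sum_const_zero, zero_add,
    Matrix.of_apply, Fin.coe_castSucc, Fin.val_last, Fin.succAbove_last,
    eq_self_iff_true, if_true]
  rw [entry_even_right (i := m + 1 + 1) (j := m + 3) (by rw [Nat.odd_iff]; omega) (by omega),
    entry_odd_skew (i := m + 1) (j := m + 3) (by rw [Nat.odd_iff]; omega) (by omega)]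
  have hM2 : (Matrix.of fun i j : Fin (m + 2) =>
        entry κ a ((i : ℕ) + 1) (if (j : ℕ) = m + 1 then m + 3 else (j : ℕ) + 1)).submatrix
          Fin.castSucc Fin.castSucc
      = (Matrix.of fun i j : Fin (m + 1) => entry κ a ((i : ℕ) + 1) ((j : ℕ) + 1)) := by
    ext i j
    simp only [Matrix.submatrix_apply, Matrix.of_apply, Fin.coe_castSucc]
    rw [if_neg (by omega)]
  have hM1 : (Matrix.of fun i j : Fin (m + 2) =>
        entry κ a ((i : ℕ) + 1) (if (j : ℕ) = m + 1 then m + 3 else (j : ℕ) + 1)).submatrix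
          ((Fin.last m).castSucc).succAbove Fin.castSucc
      = (Matrix.of fun i j : Fin (m + 1) =>
          entry κ a (if (i : ℕ) = m then m + 2 else (i : ℕ) + 1) ((j : ℕ) + 1)) := by
    ext i j
    simp only [Matrix.submatrix_apply, Matrix.of_apply, Fin.coe_castSucc]
    rw [if_neg (by omega)]
    have hv := succAbove_middle_val m i
    rcases eq_or_ne (i : ℕ) m with hi | hi
    · rw [if_pos hi] at hv
      rw [if_pos hi, hv]
    · rw [if_neg hi] at hv
      rw [if_neg hi, hv]
  rw [hM1, hM2]
  have hD : Matrix.det (Matrix.of fun i j : Fin (m + 1) =>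
      entry κ a ((i : ℕ) + 1) ((j : ℕ) + 1)) = Dpoly κ a (m + 1) := rfl
  have hT : Matrix.det (Matrix.of fun i j : Fin (m + 1) =>
      entry κ a (if (i : ℕ) = m then m + 2 else (i : ℕ) + 1) ((j : ℕ) + 1))
      = TevenM κ a m := rfl
  rw [hD, hT]
  rw [show ((-1 : LaurentQ) ^ (m + (m + 1)) : LaurentQ) = -1 from Odd.neg_one_pow ⟨m, by ring⟩,
    show ((-1 : LaurentQ) ^ (m + 1 + (m + 1)) : LaurentQ) = 1
      from Even.neg_one_pow ⟨m + 1, by ring⟩]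
  rw [show a (m + 1 + 1 - 1) = a (m + 1) from rfl, show a (m + 1 + 1) = a (m + 2) from rfl]
  ring

lemma Geven (m : ℕ) (h : Even (m + 3)) :
    TevenM κ a (m + 1) = -(Lpow (a (m + 1)) * Dpoly κ a (m + 1))
      - (Lpow (a (m + 2)) - 1) * ToddM κ a m := by
  obtain ⟨c, hc⟩ := h
  have hA : TevenM κ a (m + 1) = Matrix.det (Matrix.of fun i j : Fin (m + 2) =>
      entry κ a (if (i : ℕ) = m + 1 then m + 3 else (i : ℕ) + 1) ((j : ℕ) + 1)) := rfl
  rw [hA, Matrix.det_succ_row _ (Fin.last (m + 1)), Fin.sum_univ_castSucc,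
    Fin.sum_univ_castSucc]
  have hz : ∀ k : Fin m, (Matrix.of fun i j : Fin (m + 2) =>
      entry κ a (if (i : ℕ) = m + 1 then m + 3 else (i : ℕ) + 1) ((j : ℕ) + 1))
        (Fin.last (m + 1)) ((k.castSucc).castSucc) = 0 := by
    intro k
    simp only [Matrix.of_apply, Fin.coe_castSucc, Fin.val_last, eq_self_iff_true, if_true]
    exact entry_zero_even_left (by rw [Nat.odd_iff]; omega) (by omega)
  simp only [hz, zero_mul, mul_zero, Finset.sum_const_zero, zero_add,
    Matrix.of_apply, Fin.coe_castSucc, Fin.val_last, Fin.succAbove_last,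
    eq_self_iff_true, if_true]
  rw [entry_even_left (i := m + 3) (j := m + 1 + 1) (by rw [Nat.odd_iff]; omega) (by omega) (by omega),
    entry_even_left2 (i := m + 3) (j := m + 1) (by rw [Nat.odd_iff]; omega) (by omega)]
  have hM2 : (Matrix.of fun i j : Fin (m + 2) =>
        entry κ a (if (i : ℕ) = m + 1 then m + 3 else (i : ℕ) + 1) ((j : ℕ) + 1)).submatrix
          Fin.castSucc Fin.castSucc
      = (Matrix.of fun i j : Fin (m + 1) => entry κ a ((i : ℕ) + 1) ((j : ℕ) + 1)) := by
    ext i j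
    simp only [Matrix.submatrix_apply, Matrix.of_apply, Fin.coe_castSucc]
    rw [if_neg (by omega)]
  have hM1 : (Matrix.of fun i j : Fin (m + 2) =>
        entry κ a (if (i : ℕ) = m + 1 then m + 3 else (i : ℕ) + 1) ((j : ℕ) + 1)).submatrix
          Fin.castSucc ((Fin.last m).castSucc).succAbove
      = (Matrix.of fun i j : Fin (m + 1) =>
          entry κ a ((i : ℕ) + 1) (if (j : ℕ) = m then m + 2 else (j : ℕ) + 1)) := by
    ext i j
    simp only [Matrix.submatrix_apply, Matrix.of_apply, Fin.coe_castSucc]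
    rw [if_neg (by omega)]
    have hv := succAbove_middle_val m j
    rcases eq_or_ne (j : ℕ) m with hj | hj
    · rw [if_pos hj] at hv
      rw [if_pos hj, hv]
    · rw [if_neg hj] at hv
      rw [if_neg hj, hv]
  rw [hM1, hM2]
  have hD : Matrix.det (Matrix.of fun i j : Fin (m + 1) =>
      entry κ a ((i : ℕ) + 1) ((j : ℕ) + 1)) = Dpoly κ a (m + 1) := rfl
  have hT : Matrix.det (Matrix.of fun i j : Fin (m + 1) =>
      entry κ a ((i : ℕ) + 1) (if (j : ℕ) = m then m + 2 else (j : ℕ) + 1))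
      = ToddM κ a m := rfl
  rw [hD, hT]
  rw [show ((-1 : LaurentQ) ^ (m + 1 + m) : LaurentQ) = -1 from Odd.neg_one_pow ⟨m, by ring⟩,
    show ((-1 : LaurentQ) ^ (m + 1 + (m + 1)) : LaurentQ) = 1
      from Even.neg_one_pow ⟨m + 1, by ring⟩]
  rw [show a (m + 3 - 1) = a (m + 2) from rfl, show a (m + 3 - 2) = a (m + 1) from rfl]
  ring
lemma KD (m : ℕ) :
    Lpow (a (m + 3)) * Dpoly κ a (m + 3)
      = Lpow (a (m + 3)) * Kpoly κ a (m + 3) * Dpoly κ a (m + 2)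
        - Lpow (a (m + 1)) * Lpow (a (m + 3)) * Lpow (a (m + 4)) * Dpoly κ a (m + 1)
        - Lpow (a (m + 4)) * (Lpow (a (m + 2)) - 1)
            * (Dpoly κ a (m + 2) - Kpoly κ a (m + 2) * Dpoly κ a (m + 1)) := by
  rcases Nat.even_or_odd (m + 3) with he | ho
  · have e1 := Eeven (κ := κ) (a := a) (m + 1) (by exact he)
    have g := Geven (κ := κ) (a := a) m he
    have e0 := Eodd (κ := κ) (a := a) m (by
      obtain ⟨c, hc⟩ := he; exact ⟨c - 1, by omega⟩)
    simp only [show m + 1 + 2 = m + 3 from rfl, show m + 1 + 1 = m + 2 from rfl,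
      show m + 1 + 3 = m + 4 from rfl] at e1
    linear_combination Lpow (a (m + 3)) * e1 + Lpow (a (m + 3)) * Lpow (a (m + 4)) * g
      + Lpow (a (m + 4)) * (Lpow (a (m + 2)) - 1) * e0
  · have e1 := Eodd (κ := κ) (a := a) (m + 1) (by exact ho)
    have g := Godd (κ := κ) (a := a) m ho
    have e0 := Eeven (κ := κ) (a := a) m (by
      obtain ⟨c, hc⟩ := ho; exact ⟨c, by omega⟩)
    simp only [show m + 1 + 2 = m + 3 from rfl, show m + 1 + 1 = m + 2 from rfl,
      show m + 1 + 3 = m + 4 from rfl] at e1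
    linear_combination Lpow (a (m + 3)) * e1 + Lpow (a (m + 3)) * Lpow (a (m + 4)) * g
      + Lpow (a (m + 4)) * (Lpow (a (m + 2)) - 1) * e0

lemma sum_split (n : ℕ) (q : ℚ) (h : 1 ≤ n) :
    (∑ j ∈ Finset.range n, Lpow ((j : ℚ) * q))
      = (∑ j ∈ Finset.range (n - 1), Lpow ((j : ℚ) * q)) + Lpow (((n : ℚ) - 1) * q) := by
  obtain ⟨k, rfl⟩ : ∃ k, n = k + 1 := ⟨n - 1, by omega⟩
  rw [Finset.sum_range_succ, show k + 1 - 1 = k from rfl]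
  congr 2
  push_cast
  ring

lemma Kpoly_split (i : ℕ) (h : 1 ≤ κ i) :
    Kpoly κ a i = (∑ j ∈ Finset.range (κ i - 1), Lpow ((j : ℚ) * a i))
      + Lpow (((κ i : ℚ) - 1) * a i) := by
  rw [Kpoly, sum_split (κ i) _ h]

lemma Rlem (m : ℕ) (hc1 : (κ (m + 1) : ℚ) * a (m + 1) = a m + a (m + 2))
    (hc2 : (κ (m + 2) : ℚ) * a (m + 2) = a (m + 1) + a (m + 3))
    (hκ1 : 1 ≤ κ (m + 1)) (hκ2 : 1 ≤ κ (m + 2)) :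
    Lpow (a (m + 2)) * Dpoly κ a (m + 2)
      = (Lpow (a (m + 2)) * (∑ j ∈ Finset.range (κ (m + 2) - 1), Lpow ((j : ℚ) * a (m + 2)))
          + Lpow (a (m + 3))) * Dpoly κ a (m + 1)
        - Lpow (a (m + 3)) * Dpoly κ a m := by
  have h3 := Kpoly_split (κ := κ) (a := a) (m + 2) hκ2
  have h1 : Lpow (a (m + 2)) * Lpow (((κ (m + 2) : ℚ) - 1) * a (m + 2))
      = Lpow (a (m + 1)) * Lpow (a (m + 3)) := by
    rw [← Lpow_add, ← Lpow_add]
    congr 1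
    linear_combination hc2
  have h2 : (Lpow (a (m + 1)) - 1) * Kpoly κ a (m + 1)
      = Lpow (a m) * Lpow (a (m + 2)) - 1 := by
    rw [Kpoly, geom_lemma, ← Lpow_add, hc1]
  rcases m with _ | k
  · rw [Dpoly_two, Dpoly_one, Dpoly_zero]
    linear_combination (Lpow (a 2) * Kpoly κ a 1) * h3 + Kpoly κ a 1 * h1
      + Lpow (a 3) * h2
  · simp only [show k + 1 + 2 = k + 3 from rfl, show k + 1 + 1 = k + 2 from rfl,
      show k + 1 + 3 = k + 4 from rfl] at h3 h1 h2 ⊢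
    have hKD := KD (κ := κ) (a := a) k
    linear_combination hKD + (Lpow (a (k + 3)) * Dpoly κ a (k + 2)) * h3
      + Dpoly κ a (k + 2) * h1 + (Lpow (a (k + 4)) * Dpoly κ a (k + 1)) * h2

lemma Slem : ∀ t : ℕ, 1 ≤ t → (∀ i, 1 ≤ i → i ≤ t → 2 ≤ κ i)
    → (∀ i, 1 ≤ i → i ≤ t → (κ i : ℚ) * a i = a (i - 1) + a (i + 1))
    → Lpow (a t) * Apoly κ a t = Dpoly κ a t - Dpoly κ a (t - 1) := by
  intro t
  induction t with
  | zero => omega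
  | succ k ih =>
    intro ht hκ hch
    rcases k with _ | j
    · -- t = 1
      have hκ1 : 2 ≤ κ 1 := hκ 1 le_rfl le_rfl
      have h := shift_sum (a 1) (κ 1 - 1)
      rw [show κ 1 - 1 + 1 = κ 1 by omega] at h
      rw [Dpoly_one, Dpoly_zero,
        show Apoly κ a 1 = ∑ j ∈ Finset.range (κ 1 - 1), Lpow ((j : ℚ) * a 1) from rfl,
        show Kpoly κ a 1 = ∑ j ∈ Finset.range (κ 1), Lpow ((j : ℚ) * a 1) from rfl]
      linear_combination h
    · -- t = j + 2
      have hκ2 : 2 ≤ κ (j + 2) := hκ (j + 2) (by omega) le_rfl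
      have hIH := ih (by omega) (fun i h1 h2 => hκ i h1 (by omega))
        (fun i h1 h2 => hch i h1 (by omega))
      rw [show j + 1 - 1 = j from rfl] at hIH
      have hR := Rlem (κ := κ) (a := a) j
        (by have := hch (j + 1) (by omega) (by omega); simpa using this)
        (by have := hch (j + 2) (by omega) le_rfl; simpa using this)
        (by have := hκ (j + 1) (by omega) (by omega); omega)
        (by omega)
      have hA2 : Apoly κ a (j + 2)
          = (∑ x ∈ Finset.range (κ (j + 2) - 2), Lpow ((x : ℚ) * a (j + 2)))
              * Dpoly κ a (j + 1)
            + Lpow (((κ (j + 2) : ℚ) - 2) * a (j + 2)) * Apoly κ a (j + 1) := rfl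
      have hQ := shift_sum (a (j + 2)) (κ (j + 2) - 2)
      rw [show κ (j + 2) - 2 + 1 = κ (j + 2) - 1 by omega] at hQ
      have hEE : Lpow (a (j + 2)) * Lpow (a (j + 2))
            * Lpow (((κ (j + 2) : ℚ) - 2) * a (j + 2))
          = Lpow (a (j + 1)) * Lpow (a (j + 3)) := by
        rw [← Lpow_add, ← Lpow_add, ← Lpow_add]
        congr 1
        have := hch (j + 2) (by omega) le_rfl
        simp only [show j + 2 - 1 = j + 1 from rfl] at this
        linear_combination this
      refine (Lpow_isUnit (a (j + 2))).mul_left_cancel ?_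
      rw [show j + 2 - 1 = j + 1 from rfl, hA2]
      linear_combination (Lpow (a (j + 2)) * Dpoly κ a (j + 1)) * hQ
        + Apoly κ a (j + 1) * hEE + Lpow (a (j + 3)) * hIH - hR
/-- The Claim in the proof of Theorem 5.10: for `r ≥ 2`,
`D_r = (∑_{j=0}^{κ_r−2} L^{j·a_r})·D_{r−1} + L^{(κ_r−1)·a_r}·A_{r−1}`. -/
theorem Dpoly_eq_sum_mul_add (r : ℕ) (hr : 2 ≤ r) (a : ℕ → ℚ) (κ : ℕ → ℕ)
    (hκ : ∀ i, 1 ≤ i → i ≤ r → 2 ≤ κ i)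
    (hchain : ∀ i, 1 ≤ i → i ≤ r → (κ i : ℚ) * a i = a (i - 1) + a (i + 1)) :
    Dpoly κ a r =
      (∑ j ∈ Finset.range (κ r - 1), Lpow ((j : ℚ) * a r)) * Dpoly κ a (r - 1)
        + Lpow (((κ r : ℚ) - 1) * a r) * Apoly κ a (r - 1) := by
  obtain ⟨n, rfl⟩ : ∃ n, r = n + 2 := ⟨r - 2, by omega⟩
  rw [show n + 2 - 1 = n + 1 from rfl]
  have hR := Rlem (κ := κ) (a := a) n
    (by have := hchain (n + 1) (by omega) (by omega); simpa using this)
    (by have := hchain (n + 2) (by omega) le_rfl; simpa using this)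
    (by have := hκ (n + 1) (by omega) (by omega); omega)
    (by have := hκ (n + 2) (by omega) le_rfl; omega)
  have hS := Slem (κ := κ) (a := a) (n + 1) (by omega)
    (fun i h1 h2 => hκ i h1 (by omega)) (fun i h1 h2 => hchain i h1 (by omega))
  rw [show n + 1 - 1 = n from rfl] at hS
  have hEE2 : Lpow (a (n + 2)) * Lpow (((κ (n + 2) : ℚ) - 1) * a (n + 2))
      = Lpow (a (n + 1)) * Lpow (a (n + 3)) := by
    rw [← Lpow_add, ← Lpow_add]
    congr 1
    have := hchain (n + 2) (by omega) le_rfl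
    simp only [show n + 2 - 1 = n + 1 from rfl] at this
    linear_combination this
  refine (Lpow_isUnit (a (n + 2))).mul_left_cancel ?_
  linear_combination hR - Apoly κ a (n + 1) * hEE2 - Lpow (a (n + 3)) * hS
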